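/- Let W be a finite Coxeter group. For every v, w ∈ W, the set [e,v]_L ∩ [e,w] = {x ∈ W : x ≤_L v and x ≤ w} has a unique element of maximal length. -/

import Mathlib

/-!
The Bruhat-greatest element of `[e,v]_L ∩ [e,w]` is built by induction on `ℓ(w)`. Pick a right
descent `s` of `w`: if `vs > v`, the greatest element for `(v, ws)` also works for `(v, w)`; if
`vs < v` and `m` is the greatest element for `(vs, ws)`, then `ms` works for `(v, w)`. Both steps
rest on the lifting property of the Bruhat order, i.e. on the subword property for every reduced
word. That comes from the description of the order by reflection chains together with the strong
exchange property, which is proved with the `ZMod 2`-valued cocycle of the action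
`(t, e) ↦ (s t s, e + [t = s])` of `W` on `W × ZMod 2`. Finally, a greatest element for the Bruhat
order is the unique element of maximal length.
-/

/-- The left weak Bruhat order: `u ≤_L v` iff `ℓ(vu⁻¹) + ℓ(u) = ℓ(v)`. -/
def lWeak {B W : Type*} [Group W] {M : CoxeterMatrix B} (cs : CoxeterSystem M W)
    (u v : W) : Prop :=
  cs.length (v * u⁻¹) + cs.length u = cs.length v

/-- The strong Bruhat order: `u ≤ v` iff some reduced word for `v` has a subword
which is a word for `u`. -/
def bruhat {B W : Type*} [Group W] {M : CoxeterMatrix B} (cs : CoxeterSystem M W)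
    (u v : W) : Prop :=
  ∃ ω : List B, cs.IsReduced ω ∧ cs.wordProd ω = v ∧
    ∃ ω' : List B, ω'.Sublist ω ∧ cs.wordProd ω' = u

theorem List.Sublist.append_singleton_cases {α : Type*} {ρ ω : List α} {a : α}
    (h : ρ.Sublist (ω ++ [a])) : ρ.Sublist ω ∨ ∃ ρ', ρ = ρ' ++ [a] ∧ ρ'.Sublist ω := by
  obtain ⟨ρ₁, ρ₂, rfl, h₁, h₂⟩ := List.sublist_append_iff.1 h
  rcases List.sublist_singleton.1 h₂ with rfl | rfl
  · exact .inl (by simpa using h₁)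
  · exact .inr ⟨ρ₁, rfl, h₁⟩

namespace CoxeterSystem

open List

variable {B W : Type*} [Group W] {M : CoxeterMatrix B} (cs : CoxeterSystem M W)

local prefix:100 "s" => cs.simple
local prefix:100 "π" => cs.wordProd
local prefix:100 "ℓ" => cs.length
local prefix:100 "ris" => cs.rightInvSeq

theorem simple_mul_mul_simple_eq_simple_iff (i : B) (t : W) : s i * t * s i = s i ↔ t = s i := by
  rw [mul_eq_right, mul_eq_one_iff_eq_inv', inv_simple]

theorem rightInvSeq_alternatingWord (i j : B) (n : ℕ) :
    ris (alternatingWord i j n) = ((range n).map fun k ↦ s j * (s i * s j) ^ k).reverse := by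
  induction n generalizing i j with
  | zero => simp [alternatingWord]
  | succ n ih =>
    rw [alternatingWord_succ, rightInvSeq_concat, ih, range_succ_eq_map]
    simp only [map_reverse, map_map, map_cons, pow_zero, mul_one, reverse_cons, concat_eq_append]
    congr 3
    funext k
    simp only [Function.comp_apply, MulAut.conj_apply, inv_simple]
    rw [← mul_pow_mul, pow_succ]
    simp only [mul_assoc]


section ReflectionCocycle

variable [DecidableEq W]

def reflectionPerm (i : B) : Equiv.Perm (W × ZMod 2) :=
  Function.Involutive.toPerm (fun p ↦ (s i * p.1 * s i, p.2 + if p.1 = s i then 1 else 0)) <| by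
    rintro ⟨t, e⟩
    simp only [simple_mul_mul_simple_eq_simple_iff, add_assoc, CharTwo.add_self_eq_zero,
      add_zero, Prod.mk.injEq, and_true]
    simp [simple_mul_simple_self, mul_assoc]

@[simp]
theorem reflectionPerm_apply (i : B) (t : W) (e : ZMod 2) :
    cs.reflectionPerm i (t, e) = (s i * t * s i, e + if t = s i then 1 else 0) := rfl

theorem prod_map_reflectionPerm_apply (ω : List B) (t : W) (e : ZMod 2) :
    (ω.map cs.reflectionPerm).prod (t, e) =
      (π ω * t * (π ω)⁻¹, e + (ris ω).count t) := by
  induction ω generalizing e with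
  | nil => simp
  | cons i ω ih =>
    have hcond : π ω * t * (π ω)⁻¹ = s i ↔ (π ω)⁻¹ * s i * π ω = t := by
      constructor
      · rintro h; rw [← h]; group
      · rintro rfl; group
    simp only [map_cons, prod_cons, Equiv.Perm.mul_apply, ih, reflectionPerm_apply, rightInvSeq,
      count_cons, beq_iff_eq, hcond, wordProd_cons, mul_inv_rev, inv_simple, Prod.mk.injEq]
    refine ⟨by group, ?_⟩
    split_ifs <;> push_cast <;> ring

theorem even_count_rightInvSeq_alternatingWord (i j : B) (t : W) :
    Even ((ris (alternatingWord i j (2 * M i j))).count t) := by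
  have hperiod : ∀ k, s j * (s i * s j) ^ (M i j + k) = s j * (s i * s j) ^ k := by
    simp [pow_add, simple_mul_simple_pow]
  simp only [rightInvSeq_alternatingWord, count_reverse, two_mul, range_add, map_append, map_map,
    Function.comp_def, hperiod, count_append]
  exact ⟨_, rfl⟩

theorem prod_map_alternatingWord_two_mul {G : Type*} [Monoid G] (f : B → G) (i j : B) (m : ℕ) :
    ((alternatingWord i j (2 * m)).map f).prod = (f i * f j) ^ m := by
  induction m with
  | zero => simp [alternatingWord]
  | succ m ih =>
    rw [mul_add_one, alternatingWord_succ', alternatingWord_succ', if_neg (by simp),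
      if_pos (by simp), map_cons, map_cons, prod_cons, prod_cons, ih, pow_succ', mul_assoc]

theorem isLiftable_reflectionPerm : M.IsLiftable cs.reflectionPerm := by
  intro i j
  have hrel : π (alternatingWord i j (2 * M i j)) = 1 := by
    rw [wordProd, prod_map_alternatingWord_two_mul, simple_mul_simple_pow]
  rw [← prod_map_alternatingWord_two_mul]
  ext ⟨t, e⟩ : 1
  rw [prod_map_reflectionPerm_apply, hrel, ZMod.natCast_eq_zero_iff_even.2
    (cs.even_count_rightInvSeq_alternatingWord i j t)]
  simp

def reflectionRep : W →* Equiv.Perm (W × ZMod 2) :=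
  cs.lift ⟨cs.reflectionPerm, cs.isLiftable_reflectionPerm⟩

/-- Well defined thanks to `reflectionRep`: the parity of the number of occurrences of `t` in the
right inversion sequence of any word for `w`. -/
def inversionParity (w t : W) : ZMod 2 := (cs.reflectionRep w (t, 0)).2

theorem reflectionRep_wordProd_apply (ω : List B) (t : W) (e : ZMod 2) :
    cs.reflectionRep (π ω) (t, e) = (π ω * t * (π ω)⁻¹, e + (ris ω).count t) := by
  rw [← prod_map_reflectionPerm_apply, wordProd, map_list_prod, map_map]
  congr 3
  funext i
  exact cs.lift_apply_simple cs.isLiftable_reflectionPerm i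

theorem inversionParity_wordProd (ω : List B) (t : W) :
    cs.inversionParity (π ω) t = (ris ω).count t := by
  simp [inversionParity, reflectionRep_wordProd_apply]

theorem reflectionRep_apply (w t : W) (e : ZMod 2) :
    cs.reflectionRep w (t, e) = (w * t * w⁻¹, e + cs.inversionParity w t) := by
  obtain ⟨ω, rfl⟩ := cs.wordProd_surjective w
  rw [reflectionRep_wordProd_apply, inversionParity_wordProd]

theorem inversionParity_mul (u v t : W) :
    cs.inversionParity (u * v) t = cs.inversionParity v t + cs.inversionParity u (v * t * v⁻¹) := by
  rw [inversionParity, map_mul, Equiv.Perm.mul_apply, reflectionRep_apply, reflectionRep_apply,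
    zero_add]

theorem IsReflection.inversionParity_self {t : W} (ht : cs.IsReflection t) :
    cs.inversionParity t t = 1 := by
  obtain ⟨w, i, rfl⟩ := ht
  have h₁ := cs.inversionParity_mul w⁻¹ w (s i)
  have h₂ := cs.inversionParity_mul (w * s i) w⁻¹ (w * s i * w⁻¹)
  have h₃ := cs.inversionParity_mul w (s i) (s i)
  have hone : cs.inversionParity 1 (s i) = 0 := by
    simpa using cs.inversionParity_wordProd [] (s i)
  have hsimple : cs.inversionParity (s i) (s i) = 1 := by
    simpa using cs.inversionParity_wordProd [i] (s i)
  simp only [inv_mul_cancel, inv_inv, simple_mul_simple_cancel_right, inv_simple, hone,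
    hsimple] at h₁ h₂ h₃
  rw [show w⁻¹ * (w * s i * w⁻¹) * w = s i by group] at h₂
  linear_combination h₂ + h₃ - h₁

end ReflectionCocycle

/-- The strong exchange property, valid for every word (reduced or not). -/
theorem mem_rightInvSeq_of_isRightInversion (ω : List B) {t : W}
    (ht : cs.IsRightInversion (π ω) t) : t ∈ ris ω := by
  classical
  obtain ⟨τ, hτ, hτω⟩ := cs.exists_isReduced (π ω * t)
  have hπτ : π τ * t = π ω := by rw [← hτω, mul_assoc, ht.1.mul_self, mul_one]
  have hτt : t ∉ ris τ := fun h ↦ by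
    have := (cs.isRightInversion_of_mem_rightInvSeq hτ h).2
    rw [hπτ, ← hτω] at this
    exact lt_asymm ht.2 this
  have hparity : cs.inversionParity (π ω) t = 1 := by
    rw [← hπτ, inversionParity_mul, ht.1.inversionParity_self, ht.1.mul_self, one_mul, ht.1.inv,
      inversionParity_wordProd, count_eq_zero_of_not_mem hτt, Nat.cast_zero, add_zero]
  by_contra h
  rw [inversionParity_wordProd, count_eq_zero_of_not_mem h] at hparity
  exact zero_ne_one hparity

theorem exists_wordProd_eraseIdx_eq_mul_of_isRightInversion (ω : List B) {t : W}
    (ht : cs.IsRightInversion (π ω) t) : ∃ j < ω.length, π (ω.eraseIdx j) = π ω * t := by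
  obtain ⟨j, hj, rfl⟩ := getElem_of_mem (cs.mem_rightInvSeq_of_isRightInversion ω ht)
  refine ⟨j, by simpa using hj, ?_⟩
  rw [← wordProd_mul_getD_rightInvSeq, getD_eq_getElem]

theorem isReduced_append_singleton {ω : List B} (hω : cs.IsReduced ω) {i : B}
    (hi : ℓ (π ω) < ℓ (π ω * s i)) : cs.IsReduced (ω ++ [i]) := by
  have := cs.length_mul_simple (π ω) i
  simp only [IsReduced, wordProd_append, wordProd_singleton, length_append, length_singleton,
    ← hω.eq]
  omega

theorem exists_isReduced_append_singleton_of_isRightDescent {w : W} {i : B}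
    (hi : cs.IsRightDescent w i) :
    ∃ τ, cs.IsReduced τ ∧ cs.IsReduced (τ ++ [i]) ∧ w = π τ * s i := by
  obtain ⟨τ, hτ, hτw⟩ := cs.exists_isReduced (w * s i)
  have hw : w = π τ * s i := by rw [← hτw, simple_mul_simple_cancel_right]
  have hτi : ℓ (π τ) < ℓ (π τ * s i) := by rwa [← hτw, simple_mul_simple_cancel_right]
  exact ⟨τ, hτ, cs.isReduced_append_singleton hτ hτi, hw⟩

theorem exists_isReduced_sublist (ω : List B) :
    ∃ ρ, ρ <+ ω ∧ cs.IsReduced ρ ∧ π ρ = π ω := by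
  induction ω using reverseRecOn with
  | nil => exact ⟨[], Sublist.refl _, by simp [IsReduced], rfl⟩
  | append_singleton ω i ih =>
    obtain ⟨ρ, hρω, hρ, hπρ⟩ := ih
    rcases cs.length_mul_simple (π ρ) i with hi | hi
    · refine ⟨ρ ++ [i], hρω.append (Sublist.refl _),
        cs.isReduced_append_singleton hρ (by omega), ?_⟩
      simp only [wordProd_append, hπρ]
    · obtain ⟨j, hj, heq⟩ := cs.exists_wordProd_eraseIdx_eq_mul_of_isRightInversion ρ
        ⟨cs.isReflection_simple i, by omega⟩
      refine ⟨ρ.eraseIdx j, ((eraseIdx_sublist ρ j).trans hρω).trans (sublist_append_left _ _),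
        ?_, by rw [heq, wordProd_append, wordProd_singleton, hπρ]⟩
      have := hρ.eq
      simp only [IsReduced, heq, length_eraseIdx_of_lt hj]
      omega

def bruhatStep (u w : W) : Prop := ∃ t, cs.IsRightInversion w t ∧ u = w * t

def bruhatChain : W → W → Prop := Relation.ReflTransGen cs.bruhatStep

theorem bruhatStep_mul_simple {w : W} {i : B} (hi : ℓ w < ℓ (w * s i)) :
    cs.bruhatStep w (w * s i) :=
  ⟨s i, ⟨cs.isReflection_simple i, by rwa [simple_mul_simple_cancel_right]⟩,
    (simple_mul_simple_cancel_right _ _).symm⟩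

theorem exists_sublist_of_bruhatChain {y w : W} (h : cs.bruhatChain y w) {ω : List B}
    (hω : cs.IsReduced ω) (hωw : π ω = w) : ∃ ρ, ρ <+ ω ∧ cs.IsReduced ρ ∧ π ρ = y := by
  induction h generalizing ω with
  | refl => exact ⟨ω, Sublist.refl _, hω, hωw⟩
  | tail _ hstep ih =>
    obtain ⟨t, ht, rfl⟩ := hstep
    subst hωw
    obtain ⟨j, -, hj⟩ := cs.exists_wordProd_eraseIdx_eq_mul_of_isRightInversion ω ht
    obtain ⟨ρ, hρ, hρred, hπρ⟩ := cs.exists_isReduced_sublist (ω.eraseIdx j)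
    obtain ⟨σ, hσ, hσred, hπσ⟩ := ih hρred (by rw [hπρ, hj])
    exact ⟨σ, hσ.trans (hρ.trans (eraseIdx_sublist _ _)), hσred, hπσ⟩

/- `hlift` is `bruhatChain_mul_simple` below length `n`: this lemma, the next one and
`bruhatChain_mul_simple` form a simultaneous induction on length. -/
theorem bruhatChain_wordProd_of_sublist {n : ℕ}
    (hlift : ∀ a b i, ℓ b < n → ℓ b < ℓ (b * s i) →
      cs.bruhatChain a b → cs.bruhatChain (a * s i) (b * s i))
    {τ ρ : List B} (hτ : cs.IsReduced τ) (hτn : τ.length ≤ n) (hρ : ρ <+ τ) :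
    cs.bruhatChain (π ρ) (π τ) := by
  induction τ using reverseRecOn generalizing ρ with
  | nil => rw [sublist_nil.1 hρ]; exact .refl
  | append_singleton τ i ih =>
    have hτ' : cs.IsReduced τ := by simpa using hτ.take τ.length
    have hτlen := hτ.eq
    simp only [wordProd_append, wordProd_singleton, length_append, length_singleton] at hτlen hτn ⊢
    have hi : ℓ (π τ) < ℓ (π τ * s i) := by rw [hτlen, hτ'.eq]; omega
    rcases hρ.append_singleton_cases with hρτ | ⟨ρ, rfl, hρτ⟩
    · exact (ih hτ' (by omega) hρτ).tail (cs.bruhatStep_mul_simple hi)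
    · rw [wordProd_append, wordProd_singleton]
      exact hlift _ _ i (by rw [hτ'.eq]; omega) hi (ih hτ' (by omega) hρτ)

theorem bruhatChain_mul_simple_of_isRightDescent {n : ℕ}
    (hlift : ∀ a b i, ℓ b < n → ℓ b < ℓ (b * s i) →
      cs.bruhatChain a b → cs.bruhatChain (a * s i) (b * s i))
    {a u : W} {i : B} (hu : cs.IsRightDescent u i) (hun : ℓ (u * s i) ≤ n)
    (ha : ℓ a < ℓ (a * s i)) (h : cs.bruhatChain a u) : cs.bruhatChain a (u * s i) := by
  obtain ⟨τ, hτ, hτi, rfl⟩ := cs.exists_isReduced_append_singleton_of_isRightDescent hu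
  obtain ⟨ρ, hρ, hρred, rfl⟩ :=
    cs.exists_sublist_of_bruhatChain h hτi (by rw [wordProd_append, wordProd_singleton])
  rcases hρ.append_singleton_cases with hρτ | ⟨ρ, rfl, -⟩
  · rw [simple_mul_simple_cancel_right] at hun ⊢
    exact cs.bruhatChain_wordProd_of_sublist hlift hτ (by rwa [← hτ.eq]) hρτ
  · have := hρred.eq
    have := cs.length_wordProd_le ρ
    simp only [wordProd_append, wordProd_singleton, simple_mul_simple_cancel_right,
      length_append, length_singleton] at *
    omega

theorem bruhatChain_mul_simple {a b : W} {i : B} (hb : ℓ b < ℓ (b * s i))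
    (h : cs.bruhatChain a b) : cs.bruhatChain (a * s i) (b * s i) := by
  induction hn : ℓ b using Nat.strong_induction_on generalizing a b i with
  | _ n ih =>
  have hlift : ∀ a' b' i', ℓ b' < n → ℓ b' < ℓ (b' * s i') →
      cs.bruhatChain a' b' → cs.bruhatChain (a' * s i') (b' * s i') :=
    fun a' b' i' hb'n hb' h' ↦ ih _ hb'n hb' h' rfl
  rcases h.cases_tail with rfl | ⟨_, hau, t, ht, rfl⟩
  · exact .refl
  have hut := ht.2
  rcases cs.length_mul_simple (b * t) i with hui | hui
  · have hconj : b * t * s i = b * s i * (s i * t * s i) := by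
      simp only [← mul_assoc, simple_mul_simple_cancel_right]
    refine (hlift _ _ i (by omega) (by omega) hau).tail ⟨s i * t * s i, ⟨?_, ?_⟩, hconj⟩
    · simpa only [inv_simple] using ht.1.conj (s i)
    · rw [← hconj]; omega
  refine Relation.ReflTransGen.tail ?_ (cs.bruhatStep_mul_simple hb)
  rcases cs.length_mul_simple a i with hai | hai
  · have has := cs.bruhatChain_mul_simple_of_isRightDescent hlift (u := b * t)
      (show ℓ (b * t * s i) < ℓ (b * t) by omega) (by omega) (by omega) hau
    have := hlift _ _ i (by omega) (by rw [simple_mul_simple_cancel_right]; omega) has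
    rw [simple_mul_simple_cancel_right] at this
    exact this.tail ⟨t, ht, rfl⟩
  · exact .head ⟨s i, ⟨cs.isReflection_simple i, by omega⟩, rfl⟩ h

theorem bruhatChain_of_bruhat {y w : W} (h : bruhat cs y w) : cs.bruhatChain y w := by
  obtain ⟨ω, hω, rfl, ρ, hρ, rfl⟩ := h
  exact cs.bruhatChain_wordProd_of_sublist (fun _ _ _ _ ↦ cs.bruhatChain_mul_simple) hω le_rfl hρ

theorem bruhat_of_bruhatChain {y w : W} (h : cs.bruhatChain y w) : bruhat cs y w := by
  obtain ⟨ω, hω, rfl⟩ := cs.exists_isReduced w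
  obtain ⟨ρ, hρ, -, rfl⟩ := cs.exists_sublist_of_bruhatChain h hω rfl
  exact ⟨ω, hω, rfl, ρ, hρ, rfl⟩

/-- The subword property: `bruhat` may be tested on any reduced word. -/
theorem exists_sublist_of_bruhat {y w : W} (h : bruhat cs y w) {ω : List B}
    (hω : cs.IsReduced ω) (hωw : π ω = w) : ∃ ρ, ρ <+ ω ∧ cs.IsReduced ρ ∧ π ρ = y :=
  cs.exists_sublist_of_bruhatChain (cs.bruhatChain_of_bruhat h) hω hωw

theorem bruhat_one_left (w : W) : bruhat cs 1 w := by
  obtain ⟨ω, hω, rfl⟩ := cs.exists_isReduced w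
  exact ⟨ω, hω, rfl, [], nil_sublist ω, wordProd_nil cs⟩

theorem length_le_of_bruhat {y w : W} (h : bruhat cs y w) : ℓ y ≤ ℓ w := by
  obtain ⟨ω, hω, rfl, ρ, hρ, rfl⟩ := h
  exact (cs.length_wordProd_le ρ).trans (hω.eq ▸ hρ.length_le)

theorem eq_of_bruhat_of_length_le {y w : W} (h : bruhat cs y w) (hwy : ℓ w ≤ ℓ y) : y = w := by
  obtain ⟨ω, hω, rfl, ρ, hρ, rfl⟩ := h
  have := cs.length_wordProd_le ρ
  rw [hρ.eq_of_length (le_antisymm hρ.length_le (by rw [← hω.eq]; omega))]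

theorem bruhat_trans_mul_simple {y w : W} {i : B} (h : bruhat cs y w) (hw : ℓ w < ℓ (w * s i)) :
    bruhat cs y (w * s i) :=
  cs.bruhat_of_bruhatChain ((cs.bruhatChain_of_bruhat h).tail (cs.bruhatStep_mul_simple hw))

theorem bruhat_mul_simple_mul_simple {y w : W} {i : B} (h : bruhat cs y w)
    (hw : ℓ w < ℓ (w * s i)) : bruhat cs (y * s i) (w * s i) :=
  cs.bruhat_of_bruhatChain (cs.bruhatChain_mul_simple hw (cs.bruhatChain_of_bruhat h))

theorem bruhat_mul_simple_of_isRightDescent {y w : W} {i : B} (h : bruhat cs y w)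
    (hw : cs.IsRightDescent w i) (hy : ℓ y < ℓ (y * s i)) : bruhat cs y (w * s i) :=
  cs.bruhat_of_bruhatChain <| cs.bruhatChain_mul_simple_of_isRightDescent
    (fun _ _ _ _ ↦ cs.bruhatChain_mul_simple) hw le_rfl hy (cs.bruhatChain_of_bruhat h)

theorem bruhat_mul_simple_mul_simple_of_isRightDescent {y w : W} {i : B} (h : bruhat cs y w)
    (hw : cs.IsRightDescent w i) (hy : cs.IsRightDescent y i) :
    bruhat cs (y * s i) (w * s i) := by
  obtain ⟨τ, hτ, hτi, rfl⟩ := cs.exists_isReduced_append_singleton_of_isRightDescent hw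
  obtain ⟨ρ, hρ, -, rfl⟩ :=
    cs.exists_sublist_of_bruhat h hτi (by rw [wordProd_append, wordProd_singleton])
  rw [simple_mul_simple_cancel_right]
  rcases hρ.append_singleton_cases with hρτ | ⟨ρ, rfl, hρτ⟩
  · obtain ⟨j, -, hj⟩ :=
      cs.exists_wordProd_eraseIdx_eq_mul_of_isRightInversion ρ ⟨cs.isReflection_simple i, hy⟩
    exact ⟨τ, hτ, rfl, ρ.eraseIdx j, (eraseIdx_sublist ρ j).trans hρτ, hj⟩
  · refine ⟨τ, hτ, rfl, ρ, hρτ, ?_⟩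
    rw [wordProd_append, wordProd_singleton, simple_mul_simple_cancel_right]

theorem lWeak_one_left (v : W) : lWeak cs 1 v := by
  simp [lWeak]

theorem isRightDescent_of_lWeak {y v : W} {i : B} (h : lWeak cs y v)
    (hy : cs.IsRightDescent y i) : cs.IsRightDescent v i := by
  have := cs.length_mul_le (v * y⁻¹) (y * s i)
  rw [← mul_assoc, inv_mul_cancel_right] at this
  unfold lWeak at h
  unfold IsRightDescent at hy ⊢
  omega

theorem lWeak_mul_simple_mul_simple_iff {y v : W} {i : B} (hy : cs.IsRightDescent y i)
    (hv : cs.IsRightDescent v i) : lWeak cs (y * s i) (v * s i) ↔ lWeak cs y v := by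
  have hy' := cs.length_mul_simple y i
  have hv' := cs.length_mul_simple v i
  unfold IsRightDescent at hy hv
  rw [lWeak, lWeak, mul_inv_rev, inv_simple, mul_assoc, simple_mul_simple_cancel_left]
  omega

theorem lWeak_mul_simple_of_isRightDescent {y v : W} {i : B} (h : lWeak cs y v)
    (hy : ℓ y < ℓ (y * s i)) (hv : cs.IsRightDescent v i) : lWeak cs y (v * s i) := by
  obtain ⟨γ, hγ, hγv⟩ := cs.exists_isReduced (v * y⁻¹)
  obtain ⟨δ, hδ, rfl⟩ := cs.exists_isReduced y
  have hvγδ : v = π (γ ++ δ) := by rw [wordProd_append, ← hγv, inv_mul_cancel_right]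
  obtain ⟨j, hj, hvj⟩ := cs.exists_wordProd_eraseIdx_eq_mul_of_isRightInversion (γ ++ δ)
    (by rw [← hvγδ]; exact ⟨cs.isReflection_simple i, hv⟩)
  have hv' := cs.length_mul_simple v i
  unfold IsRightDescent at hv
  unfold lWeak at h ⊢
  rw [hγv, hγ.eq, hδ.eq] at h
  rw [← hvγδ] at hvj
  rcases lt_or_ge j γ.length with hjγ | hjγ
  · rw [eraseIdx_append_of_lt_length hjγ, wordProd_append] at hvj
    have h₁ := cs.length_wordProd_le (γ.eraseIdx j)
    have h₂ := cs.length_mul_le (π (γ.eraseIdx j)) (π δ)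
    rw [length_eraseIdx_of_lt hjγ] at h₁
    rw [hvj, hδ.eq] at h₂
    rw [← hvj, mul_inv_cancel_right, hvj, hδ.eq]
    omega
  · rw [eraseIdx_append_of_length_le hjγ, wordProd_append, hvγδ, wordProd_append, mul_assoc,
      mul_right_inj] at hvj
    have := cs.length_wordProd_le (δ.eraseIdx (j - γ.length))
    rw [length_append] at hj
    rw [length_eraseIdx_of_lt (by omega), hvj] at this
    have := hδ.eq
    omega

/-- `m` is the greatest element of `[e,v]_L ∩ [e,w]` for the Bruhat order. -/
def IsBruhatGreatest (v w m : W) : Prop :=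
  (lWeak cs m v ∧ bruhat cs m w) ∧ ∀ y, lWeak cs y v → bruhat cs y w → bruhat cs y m

theorem isBruhatGreatest_one (v : W) : cs.IsBruhatGreatest v 1 1 := by
  refine ⟨⟨cs.lWeak_one_left v, cs.bruhat_one_left 1⟩, fun y _ hy ↦ ?_⟩
  have := cs.length_le_of_bruhat hy
  rw [length_one, Nat.le_zero, length_eq_zero_iff] at this
  exact this ▸ cs.bruhat_one_left 1

theorem IsBruhatGreatest.of_mul_simple {v w m : W} {i : B}
    (hm : cs.IsBruhatGreatest v (w * s i) m) (hw : cs.IsRightDescent w i)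
    (hv : ℓ v < ℓ (v * s i)) : cs.IsBruhatGreatest v w m := by
  obtain ⟨⟨hmv, hmw⟩, hmax⟩ := hm
  have hw' : ℓ (w * s i) < ℓ (w * s i * s i) := by rwa [simple_mul_simple_cancel_right]
  refine ⟨⟨hmv, by simpa using cs.bruhat_trans_mul_simple hmw hw'⟩, fun y hyv hyw ↦ ?_⟩
  have hy : ¬cs.IsRightDescent y i := fun hy ↦ lt_asymm hv (cs.isRightDescent_of_lWeak hyv hy)
  exact hmax y hyv (cs.bruhat_mul_simple_of_isRightDescent hyw hw (by
    rw [cs.not_isRightDescent_iff.1 hy]; omega))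

theorem IsBruhatGreatest.mul_simple {v w m : W} {i : B}
    (hm : cs.IsBruhatGreatest (v * s i) (w * s i) m) (hw : cs.IsRightDescent w i)
    (hv : cs.IsRightDescent v i) : cs.IsBruhatGreatest v w (m * s i) := by
  obtain ⟨⟨hmv, hmw⟩, hmax⟩ := hm
  have hw' : ℓ (w * s i) < ℓ (w * s i * s i) := by rwa [simple_mul_simple_cancel_right]
  have hm : ℓ m < ℓ (m * s i) := by
    by_contra hm
    have := cs.isRightDescent_of_lWeak hmv
      ((not_lt.1 hm).lt_of_ne (cs.length_mul_simple_ne m i) : cs.IsRightDescent m i)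
    exact lt_asymm hv (by rwa [IsRightDescent, simple_mul_simple_cancel_right] at this)
  have hmi : cs.IsRightDescent (m * s i) i := by
    rwa [IsRightDescent, simple_mul_simple_cancel_right]
  refine ⟨⟨?_, by simpa using cs.bruhat_mul_simple_mul_simple hmw hw'⟩, fun y hyv hyw ↦ ?_⟩
  · rw [← cs.lWeak_mul_simple_mul_simple_iff hmi hv, simple_mul_simple_cancel_right]
    exact hmv
  by_cases hyi : cs.IsRightDescent y i
  · have := hmax (y * s i) ((cs.lWeak_mul_simple_mul_simple_iff hyi hv).2 hyv)
      (cs.bruhat_mul_simple_mul_simple_of_isRightDescent hyw hw hyi)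
    simpa using cs.bruhat_mul_simple_mul_simple this hm
  · have hy : ℓ y < ℓ (y * s i) := by rw [cs.not_isRightDescent_iff.1 hyi]; omega
    exact cs.bruhat_trans_mul_simple (hmax y (cs.lWeak_mul_simple_of_isRightDescent hyv hy hv)
      (cs.bruhat_mul_simple_of_isRightDescent hyw hw hy)) hm

theorem exists_isBruhatGreatest (v w : W) : ∃ m, cs.IsBruhatGreatest v w m := by
  induction hn : ℓ w using Nat.strong_induction_on generalizing v w with
  | _ n ih =>
  rcases eq_or_ne w 1 with rfl | hw
  · exact ⟨1, cs.isBruhatGreatest_one v⟩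
  obtain ⟨i, hi⟩ := cs.exists_rightDescent_of_ne_one hw
  have hlt : ℓ (w * s i) < n := hn ▸ hi
  rcases cs.length_mul_simple v i with hv | hv
  · obtain ⟨m, hm⟩ := ih _ hlt v (w * s i) rfl
    exact ⟨m, hm.of_mul_simple cs hi (by omega)⟩
  · obtain ⟨m, hm⟩ := ih _ hlt (v * s i) (w * s i) rfl
    exact ⟨m * s i, hm.mul_simple cs hi (by unfold IsRightDescent; omega)⟩

end CoxeterSystem

theorem stmt2_general {B W : Type*} [Group W] {M : CoxeterMatrix B} (cs : CoxeterSystem M W)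
    (v w : W) :
    ∃! x : W, (lWeak cs x v ∧ bruhat cs x w) ∧
      ∀ y : W, lWeak cs y v → bruhat cs y w → cs.length y ≤ cs.length x := by
  obtain ⟨m, hm, hmax⟩ := cs.exists_isBruhatGreatest v w
  refine ⟨m, ⟨hm, fun y hyv hyw ↦ cs.length_le_of_bruhat (hmax y hyv hyw)⟩, ?_⟩
  rintro x ⟨⟨hxv, hxw⟩, hxmax⟩
  exact cs.eq_of_bruhat_of_length_le (hmax x hxv hxw) (hxmax m hm.1 hm.2)

/-- In a finite Coxeter group, for every `v, w` the set
`[e,v]_L ∩ [e,w] = {x : x ≤_L v and x ≤ w}` has a unique element of maximal length. -/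
theorem stmt2 {B W : Type*} [Group W] {M : CoxeterMatrix B} (cs : CoxeterSystem M W)
    [Finite W] (v w : W) :
    ∃! x : W, (lWeak cs x v ∧ bruhat cs x w) ∧
      ∀ y : W, lWeak cs y v → bruhat cs y w → cs.length y ≤ cs.length x :=
  stmt2_general cs v w
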